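/- arXiv:1908.00143 — 3 statements merged into one kernel-verified Lean document; each statement's English description precedes it below -/
import Mathlib

section
/- Let α, β, γ be real numbers. Then the following are equivalent: (1) there exists τ > 0 such that αx² − 2βxy + γy² ≥ τx² + τ⁻¹y² for all real x, y; (2) α > 0, γ > 0, and √(αγ) − |β| ≥ 1. -/
private lemma quad_nonneg (a b c : ℝ) (ha : 0 ≤ a) (hc : 0 ≤ c) (hb : b ^ 2 ≤ a * c)
    (x y : ℝ) : 0 ≤ a * x ^ 2 - 2 * b * x * y + c * y ^ 2 := by
  have hs : Real.sqrt (a * c) ^ 2 = a * c := Real.sq_sqrt (by positivity)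
  have hbs : |b| ≤ Real.sqrt (a * c) := by
    have := Real.sqrt_le_sqrt hb
    rwa [Real.sqrt_sq_eq_abs] at this
  have hsa : Real.sqrt a ^ 2 = a := Real.sq_sqrt ha
  have hsc : Real.sqrt c ^ 2 = c := Real.sq_sqrt hc
  have hmul : Real.sqrt a * Real.sqrt c = Real.sqrt (a * c) := (Real.sqrt_mul ha c).symm
  rcases le_total 0 (x * y) with hxy | hxy
  · nlinarith [sq_nonneg (Real.sqrt a * x - Real.sqrt c * y), le_abs_self b,
      mul_nonneg (sub_nonneg.2 hbs) hxy]
  · nlinarith [sq_nonneg (Real.sqrt a * x + Real.sqrt c * y), neg_abs_le b,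
      mul_nonneg (sub_nonneg.2 hbs) (neg_nonneg.2 hxy)]

private lemma disc_of_nonneg (a b c : ℝ) (ha : 0 ≤ a)
    (h : ∀ x y : ℝ, 0 ≤ a * x ^ 2 - 2 * b * x * y + c * y ^ 2) :
    b ^ 2 ≤ a * c := by
  rcases ha.lt_or_eq with ha' | ha'
  · have := h b a
    nlinarith
  · -- a = 0 : show b = 0
    have hb : b = 0 := by
      by_contra hb
      have hb2 : 0 < b ^ 2 := by positivity
      have := h ((c + 1) / (2 * b ^ 2) * b) 1
      rw [← ha'] at this
      have hx : (2:ℝ) * ((c + 1) / (2 * b ^ 2) * b) * b = c + 1 := by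
        field_simp
      nlinarith [h 0 1]
    rw [hb]
    nlinarith [h 0 1, ha]

theorem stmt0 (α β γ : ℝ) :
    (∃ τ : ℝ, 0 < τ ∧ ∀ x y : ℝ,
        α * x ^ 2 - 2 * β * x * y + γ * y ^ 2 ≥ τ * x ^ 2 + τ⁻¹ * y ^ 2) ↔
      (0 < α ∧ 0 < γ ∧ Real.sqrt (α * γ) - |β| ≥ 1) := by
  constructor
  · rintro ⟨τ, hτ, h⟩
    have hτi : 0 < τ⁻¹ := by positivity
    have hατ : τ ≤ α := by have := h 1 0; simpa using by nlinarith [h 1 0]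
    have hγτ : τ⁻¹ ≤ γ := by nlinarith [h 0 1]
    have hα : 0 < α := lt_of_lt_of_le hτ hατ
    have hγ : 0 < γ := lt_of_lt_of_le hτi hγτ
    refine ⟨hα, hγ, ?_⟩
    have hdisc : β ^ 2 ≤ (α - τ) * (γ - τ⁻¹) := by
      apply disc_of_nonneg (α - τ) β (γ - τ⁻¹) (by linarith)
      intro x y
      have := h x y
      nlinarith [this]
    set s := Real.sqrt (α * γ) with hs
    have hs2 : s ^ 2 = α * γ := Real.sq_sqrt (by positivity)
    have hττ : τ * τ⁻¹ = 1 := mul_inv_cancel₀ hτ.ne'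
    have hαγ1 : 1 ≤ α * γ := by nlinarith
    have hs1 : 1 ≤ s := by nlinarith [Real.sqrt_nonneg (α * γ)]
    -- τ*γ + τ⁻¹*α ≥ 2 s
    have hsa : Real.sqrt α ^ 2 = α := Real.sq_sqrt hα.le
    have hsg : Real.sqrt γ ^ 2 = γ := Real.sq_sqrt hγ.le
    have hmul : Real.sqrt α * Real.sqrt γ = s := (Real.sqrt_mul hα.le γ).symm
    have hamgm : 2 * s ≤ τ * γ + τ⁻¹ * α := by
      have h1 : 0 ≤ (τ * Real.sqrt γ - Real.sqrt α) ^ 2 := sq_nonneg _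
      have h2 : τ ^ 2 * γ - 2 * τ * s + α ≥ 0 := by nlinarith
      nlinarith [mul_le_mul_of_nonneg_left h2.le (le_of_lt hτi)]
    have hβ2 : β ^ 2 ≤ (s - 1) ^ 2 := by nlinarith
    have : |β| ≤ s - 1 := by
      nlinarith [sq_abs β, abs_nonneg β]
    linarith
  · rintro ⟨hα, hγ, hs⟩
    set sa := Real.sqrt α with hsa'
    set sg := Real.sqrt γ with hsg'
    have hsa0 : 0 < sa := Real.sqrt_pos.2 hα
    have hsg0 : 0 < sg := Real.sqrt_pos.2 hγ
    have hsa2 : sa ^ 2 = α := Real.sq_sqrt hα.le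
    have hsg2 : sg ^ 2 = γ := Real.sq_sqrt hγ.le
    have hmul : sa * sg = Real.sqrt (α * γ) := (Real.sqrt_mul hα.le γ).symm
    have hs1 : 1 + |β| ≤ sa * sg := by rw [hmul]; linarith
    have hβ : 0 ≤ |β| := abs_nonneg β
    refine ⟨sa / sg, by positivity, ?_⟩
    intro x y
    have hτinv : (sa / sg)⁻¹ = sg / sa := by rw [inv_div]
    have ha : 0 ≤ α - sa / sg := by
      rw [sub_nonneg, div_le_iff₀ hsg0]
      nlinarith
    have hc : 0 ≤ γ - sg / sa := by
      rw [sub_nonneg, div_le_iff₀ hsa0]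
      nlinarith
    have hac : (α - sa / sg) * (γ - sg / sa) = (sa * sg - 1) ^ 2 := by
      rw [← hsa2, ← hsg2]
      field_simp
    have hb2 : β ^ 2 ≤ (α - sa / sg) * (γ - sg / sa) := by
      rw [hac]
      nlinarith [sq_abs β]
    have := quad_nonneg _ β _ ha hc hb2 x y
    rw [ge_iff_le, hτinv]
    linarith [this]
end

section
/- Let a, c > 0 and b ∈ ℝ with ac − b² > 0. Then with τ = √(a/c) and C = √(ac) − |b|, the inequality ax² − 2bxy + cy² ≥ C(τx² + τ⁻¹y²) holds for all real x and y, and C is the largest constant for which such an inequality holds for some τ > 0. -/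
theorem stmt2 (a b c : ℝ) (ha : 0 < a) (hc : 0 < c) (hdet : a * c - b ^ 2 > 0) :
    (∀ x y : ℝ,
        a * x ^ 2 - 2 * b * x * y + c * y ^ 2 ≥
          (Real.sqrt (a * c) - |b|) *
            (Real.sqrt (a / c) * x ^ 2 + (Real.sqrt (a / c))⁻¹ * y ^ 2)) ∧
    (∀ C : ℝ, 0 < C →
        (∃ τ : ℝ, 0 < τ ∧ ∀ x y : ℝ,
            a * x ^ 2 - 2 * b * x * y + c * y ^ 2 ≥ C * (τ * x ^ 2 + τ⁻¹ * y ^ 2)) →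
        C ≤ Real.sqrt (a * c) - |b|) := by
  set sa := Real.sqrt a with hsa
  set sc := Real.sqrt c with hsc
  have hsa0 : 0 < sa := Real.sqrt_pos.2 ha
  have hsc0 : 0 < sc := Real.sqrt_pos.2 hc
  have hsa2 : sa ^ 2 = a := Real.sq_sqrt ha.le
  have hsc2 : sc ^ 2 = c := Real.sq_sqrt hc.le
  have hmul : Real.sqrt (a * c) = sa * sc := Real.sqrt_mul ha.le c
  have hdiv : Real.sqrt (a / c) = sa / sc := Real.sqrt_div ha.le c
  set t := Real.sqrt (a / c) with hT
  have ht0 : 0 < t := by rw [hdiv]; positivity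
  have htsc : t * sc = sa := by rw [hdiv]; field_simp
  have htinv : t⁻¹ = sc / sa := by rw [hdiv, inv_div]
  have ht1 : sa * sc * t = a := by
    have h : sa * sc * t = sa * (t * sc) := by ring
    rw [h, htsc, ← hsa2]; ring
  have ht2 : sa * sc * t⁻¹ = c := by
    have h : sa * sc * (sc / sa) = sc ^ 2 := by
      field_simp
    rw [htinv, h, hsc2]
  constructor
  · intro x y
    rw [hmul]
    have habs : 2 * b * x * y ≤ |b| * (t * x ^ 2 + t⁻¹ * y ^ 2) := by
      have h1 : 2 * b * x * y ≤ 2 * |b| * |x| * |y| := by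
        have h := le_abs_self (b * (x * y))
        rw [abs_mul, abs_mul] at h
        nlinarith
      have hq : t * x ^ 2 + t⁻¹ * y ^ 2 - 2 * |x| * |y| =
          t⁻¹ * (t * |x| - |y|) ^ 2 := by
        rw [← sq_abs x, ← sq_abs y]
        have hinv : t⁻¹ * t = 1 := inv_mul_cancel₀ ht0.ne'
        linear_combination (2 * |x| * |y| - t * |x| ^ 2) * hinv
      have h2 : 2 * |x| * |y| ≤ t * x ^ 2 + t⁻¹ * y ^ 2 := by
        have key := mul_nonneg (inv_nonneg.2 ht0.le) (sq_nonneg (t * |x| - |y|))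
        linarith [hq]
      nlinarith [abs_nonneg b, abs_nonneg x, abs_nonneg y]
    have hexp : (sa * sc - |b|) * (t * x ^ 2 + t⁻¹ * y ^ 2) =
        a * x ^ 2 + c * y ^ 2 - |b| * (t * x ^ 2 + t⁻¹ * y ^ 2) := by
      linear_combination x ^ 2 * ht1 + y ^ 2 * ht2
    rw [hexp]; linarith
  · rintro C hC ⟨τ, hτ, hineq⟩
    rw [hmul]
    have hct2 : c * t ^ 2 = a := by
      have h : c * t ^ 2 = (t * sc) ^ 2 := by rw [← hsc2]; ring
      rw [h, htsc, hsa2]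
    obtain ⟨ε, hε2, hεb⟩ : ∃ ε : ℝ, ε ^ 2 = 1 ∧ b * ε = |b| := by
      rcases le_or_gt 0 b with h | h
      · exact ⟨1, by norm_num, by rw [abs_of_nonneg h]; ring⟩
      · exact ⟨-1, by norm_num, by rw [abs_of_neg h]; ring⟩
    have key := hineq 1 (ε * t)
    have key' : a - 2 * |b| * t + c * t ^ 2 ≥ C * (τ + τ⁻¹ * t ^ 2) := by
      have e1 : a * 1 ^ 2 - 2 * b * 1 * (ε * t) + c * (ε * t) ^ 2 =
          a - 2 * |b| * t + c * t ^ 2 := by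
        linear_combination (-2 * t) * hεb + c * t ^ 2 * hε2
      have e2 : C * (τ * 1 ^ 2 + τ⁻¹ * (ε * t) ^ 2) = C * (τ + τ⁻¹ * t ^ 2) := by
        linear_combination C * τ⁻¹ * t ^ 2 * hε2
      rw [e1, e2] at key
      exact key
    have hamgm : τ + τ⁻¹ * t ^ 2 - 2 * t = τ⁻¹ * (τ - t) ^ 2 := by
      field_simp
      ring
    have hc2 : C * (τ + τ⁻¹ * t ^ 2) ≥ C * (2 * t) := by
      have hnn := mul_nonneg (inv_nonneg.2 hτ.le) (sq_nonneg (τ - t))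
      have : τ + τ⁻¹ * t ^ 2 ≥ 2 * t := by linarith [hamgm]
      exact mul_le_mul_of_nonneg_left this hC.le
    have hfin : (sa * sc - |b| - C) * t ≥ 0 := by
      have hexp2 : (sa * sc - |b| - C) * t = a - |b| * t - C * t := by
        linear_combination ht1
      rw [hexp2]
      linarith [key', hc2, hct2]
    have hX : 0 ≤ sa * sc - |b| - C := by
      by_contra h
      push_neg at h
      nlinarith [hfin, ht0, mul_pos ht0 ht0]
    linarith
end

section
/- Let p > 1, F_p(ζ) = |ζ|^p on ℂ, and I_p ξ = ξ + (1 − 2/p) ξ̄ for ξ ∈ ℂ. Viewing F_p as a function on ℝ², for every ζ ≠ 0 and every ξ ∈ ℂ, the second derivative (Hessian quadratic/bilinear action) of F_p at ζ applied to the direction ξ satisfies: d²F_p(ζ)[ξ] = p²/2 · |ζ|^{p−2} · (sign ζ · I_p(sign ζ̄ · ξ)), where both sides are interpreted via the identification of ℂ with ℝ² sending α + iβ to (α, β). -/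
noncomputable def csign (ζ : ℂ) : ℂ := if ζ = 0 then 0 else ζ / (‖ζ‖ : ℂ)

noncomputable def Ip (p : ℝ) (ξ : ℂ) : ℂ := ξ + ((1 - 2 / p : ℝ) : ℂ) * (starRingEnd ℂ) ξ

/-!
Away from the origin `‖z‖ ^ p = (‖z‖ ^ 2) ^ (p / 2)` is smooth with gradient `p ‖z‖ ^ (p - 2) z`;
differentiating once more gives the Hessian `p ‖ζ‖ ^ (p - 2) (I + (p - 2) u ⊗ u)` with
`u = ζ / ‖ζ‖ = sign ζ`. In the rotated coordinate `a = conj u * ξ` this is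
`‖ζ‖ ^ (p - 2) diag(p (p - 1), p)` on `(Re a, Im a)`, and so is `p² / 2 · ‖ζ‖ ^ (p - 2) I_p`,
since `I_p` acts as `diag(2 - 2 / p, 2 / p)`.
-/

open Filter Topology ComplexConjugate
open scoped RealInnerProductSpace

section NormRpow

variable {E : Type*} [NormedAddCommGroup E] [InnerProductSpace ℝ E] {x : E}

theorem hasStrictFDerivAt_norm_rpow_of_ne_zero (p : ℝ) (hx : x ≠ 0) :
    HasStrictFDerivAt (fun z : E ↦ ‖z‖ ^ p) ((p * ‖x‖ ^ (p - 2)) • innerSL ℝ x) x := by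
  convert! (hasStrictFDerivAt_norm_sq x).rpow_const (p := p / 2) (by simp [hx]) using 0
  simp_rw [← Real.rpow_natCast_mul (norm_nonneg _), ← Nat.cast_smul_eq_nsmul ℝ, smul_smul]
  ring_nf

theorem fderiv_norm_rpow_eventuallyEq (p : ℝ) (hx : x ≠ 0) :
    fderiv ℝ (fun z : E ↦ ‖z‖ ^ p) =ᶠ[𝓝 x] fun z ↦ (p * ‖z‖ ^ (p - 2)) • innerSL ℝ z := by
  filter_upwards [isOpen_ne.mem_nhds hx] with z hz
  exact (hasStrictFDerivAt_norm_rpow_of_ne_zero p hz).hasFDerivAt.fderiv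

theorem iteratedFDeriv_two_norm_rpow_apply (p : ℝ) (hx : x ≠ 0) (v w : E) :
    iteratedFDeriv ℝ 2 (fun z : E ↦ ‖z‖ ^ p) x ![v, w] =
      p * ‖x‖ ^ (p - 2) * (⟪v, w⟫ + (p - 2) * ⟪‖x‖⁻¹ • x, v⟫ * ⟪‖x‖⁻¹ • x, w⟫) := by
  have hcoeff := (hasStrictFDerivAt_norm_rpow_of_ne_zero (p - 2) hx).hasFDerivAt.const_mul p
  have hsecond := (fderiv_norm_rpow_eventuallyEq p hx).fderiv_eq.trans
    (hcoeff.smul (innerSL ℝ (E := E)).hasFDerivAt).fderiv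
  rw [iteratedFDeriv_two_apply, hsecond]
  simp only [Matrix.cons_val_zero, Matrix.cons_val_one, Matrix.cons_val_fin_one,
    add_apply, smul_apply, ContinuousLinearMap.smulRight_apply, innerSL_apply_apply,
    inner_smul_left, smul_eq_mul, RCLike.conj_to_real]
  -- the derivative of `innerSL ℝ` is itself viewed as `RingHom.id`-linear; only `erw` sees through
  erw [innerSL_apply_apply, innerSL_apply_apply]
  rw [Real.rpow_sub (norm_pos_iff.mpr hx) (p - 2) 2, Real.rpow_two]
  field_simp

end NormRpow

theorem csign_eq_inv_norm_smul (ζ : ℂ) : csign ζ = (‖ζ‖⁻¹ : ℝ) • ζ := by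
  unfold csign
  split_ifs with h
  · simp [h]
  · rw [Complex.real_smul, div_eq_inv_mul, Complex.ofReal_inv]

theorem csign_conj (ζ : ℂ) : csign (conj ζ) = conj (csign ζ) := by
  simp [csign_eq_inv_norm_smul, Complex.real_smul]

theorem norm_csign {ζ : ℂ} (hζ : ζ ≠ 0) : ‖csign ζ‖ = 1 := by
  rw [csign_eq_inv_norm_smul, norm_smul, norm_inv, norm_norm,
    inv_mul_cancel₀ (norm_ne_zero_iff.mpr hζ)]

theorem re_mul_Ip_conj_mul_mul_conj (p : ℝ) {s : ℂ} (hs : ‖s‖ = 1) (ξ ξ' : ℂ) :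
    p ^ 2 / 2 * (s * Ip p (conj s * ξ) * conj ξ').re =
      p * (⟪ξ, ξ'⟫ + (p - 2) * ⟪s, ξ⟫ * ⟪s, ξ'⟫) := by
  have hs2 : s.re ^ 2 + s.im ^ 2 = 1 := by
    rw [sq, sq, ← Complex.normSq_apply, ← Complex.sq_norm, hs, one_pow]
  -- `2 / 0 = 0`, but at `p = 0` both sides vanish anyway
  have hp : p ^ 2 / 2 * (1 - 2 / p) = p * (p - 2) / 2 := by
    rcases eq_or_ne p 0 with rfl | hp
    · simp
    · field_simp
  simp only [Ip, Complex.inner, Complex.mul_re, Complex.mul_im, Complex.add_re, Complex.add_im,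
    Complex.ofReal_re, Complex.ofReal_im, Complex.conj_re, Complex.conj_im]
  generalize 1 - 2 / p = c at hp ⊢
  linear_combination ((s.re ^ 2 - s.im ^ 2) * (ξ.re * ξ'.re - ξ.im * ξ'.im)
      + 2 * s.re * s.im * (ξ.re * ξ'.im + ξ.im * ξ'.re)) * hp
    + p * (ξ.re * ξ'.re + ξ.im * ξ'.im) * hs2

theorem stmt10_general (p : ℝ) (ζ : ℂ) (hζ : ζ ≠ 0) (ξ ξ' : ℂ) :
    iteratedFDeriv ℝ 2 (fun z : ℂ => ‖z‖ ^ p) ζ ![ξ, ξ'] =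
      (((p ^ 2 / 2 * ‖ζ‖ ^ (p - 2) : ℝ) :ℂ) *
          (csign ζ * Ip p (csign ((starRingEnd ℂ) ζ) * ξ)) * (starRingEnd ℂ) ξ').re := by
  rw [iteratedFDeriv_two_norm_rpow_apply p hζ, csign_conj, mul_assoc (Complex.ofReal _),
    Complex.re_ofReal_mul, mul_right_comm (p ^ 2 / 2),
    re_mul_Ip_conj_mul_mul_conj p (norm_csign hζ), ← csign_eq_inv_norm_smul]
  ring

/-- The Hessian identity `d²F_p(ζ)𝒱(ξ) = (p²/2)|ζ|^{p-2} 𝒱(sign ζ · I_p(sign ζ̄ · ξ))`,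
expressed by pairing both sides (as vectors in `ℝ² ≅ ℂ`) with an arbitrary direction `ξ'`
via the real inner product `Re(v · conj w)` on `ℂ ≅ ℝ²`. -/
theorem stmt10 (p : ℝ) (hp : 1 < p) (ζ : ℂ) (hζ : ζ ≠ 0) (ξ ξ' : ℂ) :
    iteratedFDeriv ℝ 2 (fun z : ℂ => ‖z‖ ^ p) ζ ![ξ, ξ'] =
      (((p ^ 2 / 2 * ‖ζ‖ ^ (p - 2) : ℝ) :ℂ) *
          (csign ζ * Ip p (csign ((starRingEnd ℂ) ζ) * ξ)) * (starRingEnd ℂ) ξ').re :=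
  stmt10_general p ζ hζ ξ ξ'
end
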